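/- arXiv:1211.1703 — 2 statements merged into one kernel-verified Lean document; each statement's English description precedes it below -/
import Mathlib

section
/- Fix n ≥ 1, reals a_i > 0, d_i > 0, p_i ∈ (0,1) for i ∈ [n], and reals κ > 0, B and x_i > 0 satisfying B = κ·(1 + Σ_{i∈[n]} a_i/d_i) and x_i = κ·a_i/(p_i·d_i) for all i. Suppose u : 𝒫([n]) → ℝ is a maximizer of the LP2 objective over LP2-feasible functions, and u is monotone (S ⊆ T implies u(S) ≤ u(T)) and supermodular (u(S∪T) + u(S∩T) ≥ u(S) + u(T)). Define q_i(S) = 1 if i ∈ S and q_i(S) = (u(S∪{i}) − u(S))/d_i if i ∉ S. Then the pair (u, q) is feasible for LP1 (with parameters a, d, p) and maximizes the LP1 objective over all LP1-feasible pairs. Moreover, if u is the unique LP2 maximizer, then (u, q) is the unique LP1 maximizer. -/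
open Finset
open scoped BigOperators Classical

/-- The probability of the set `S` of items having high value. -/
def pmass (n : ℕ) (p : Fin n → ℝ) (S : Finset (Fin n)) : ℝ :=
  (∏ i ∈ S, p i) * ∏ i ∈ Sᶜ, (1 - p i)

/-- The valuation vector of type `S`: `a i + d i` for `i ∈ S` (high) and `a i` otherwise. -/
def vval (n : ℕ) (a d : Fin n → ℝ) (S : Finset (Fin n)) (i : Fin n) : ℝ :=
  if i ∈ S then a i + d i else a i

/-- Feasibility for LP1: (BIC), (IR) and (PROB). -/
def LP1Feasible (n : ℕ) (a d : Fin n → ℝ) (u : Finset (Fin n) → ℝ)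
    (q : Finset (Fin n) → Fin n → ℝ) : Prop :=
  (∀ S T : Finset (Fin n),
      u S ≥ u T + ∑ i, (vval n a d S i - vval n a d T i) * q T i) ∧
  (∀ S : Finset (Fin n), 0 ≤ u S) ∧
  (∀ S : Finset (Fin n), ∀ i, 0 ≤ q S i ∧ q S i ≤ 1)

/-- The LP1 objective (expected revenue). -/
def LP1Obj (n : ℕ) (a d p : Fin n → ℝ) (u : Finset (Fin n) → ℝ)
    (q : Finset (Fin n) → Fin n → ℝ) : ℝ :=
  ∑ S : Finset (Fin n), pmass n p S * ((∑ i, vval n a d S i * q S i) - u S)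

/-- Feasibility for LP2. -/
def LP2Feasible (n : ℕ) (d : Fin n → ℝ) (u : Finset (Fin n) → ℝ) : Prop :=
  (∀ S : Finset (Fin n), ∀ i ∉ S, u (insert i S) - u S ≤ d i) ∧
  (∀ S : Finset (Fin n), 0 ≤ u S)

/-- The LP2 objective. -/
def LP2Obj (n : ℕ) (p x : Fin n → ℝ) (B : ℝ) (u : Finset (Fin n) → ℝ) : ℝ :=
  ∑ S : Finset (Fin n), pmass n p S * ((∑ i ∈ S, x i) - B) * u S

/-- The allocation rule induced by an LP2 solution `u`. -/
noncomputable def qOf (n : ℕ) (d : Fin n → ℝ) (u : Finset (Fin n) → ℝ)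
    (S : Finset (Fin n)) (i : Fin n) : ℝ :=
  if i ∈ S then 1 else (u (insert i S) - u S) / d i

/-!
For an LP1-feasible pair `(u', q')`, (BIC) between `S` and `S ∪ {i}` gives
`d i * q' S i ≤ u' (S ∪ {i}) - u' S` for `i ∉ S`, and (PROB) gives `q' S i ≤ 1`; so the LP1
objective is at most `revenueBound u'`, with equality for `q' = qOf u'`. Re-indexing the marginal
terms by `T = S ∪ {i}`, using `p i * p(T ∖ {i}) = (1 - p i) * p(T)`, shows that
`κ * revenueBound w` is the LP2 objective of `w` plus a constant. As `u'` is LP2-feasible,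
LP2-optimality of `u` bounds the LP1 objective by its value at `(u, qOf u)`; under uniqueness,
equality forces equality in each of these bounds.

`(u, qOf u)` is itself LP1-feasible: (PROB) is monotonicity plus the LP2 constraint, and (BIC)
combines supermodularity (the marginal gains at `T` of the elements of `S ∖ T` add up to at
most `u (S ∪ T) - u T`) with the bound `d i` on marginal gains
(`u (S ∪ T) ≤ u S + ∑_{T ∖ S} d`).
-/

section SetFunction

variable {α : Type*} [DecidableEq α] {f : Finset α → ℝ}

lemma sum_marginal_le_of_supermodular
    (hsuper : ∀ S T : Finset α, f S + f T ≤ f (S ∪ T) + f (S ∩ T)) (S T : Finset α) :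
    ∑ i ∈ S \ T, (f (insert i T) - f T) ≤ f (S ∪ T) - f T := by
  induction S using Finset.induction_on with
  | empty => simp
  | @insert j S hjS ih =>
    rw [insert_union]
    by_cases hjT : j ∈ T
    · rwa [insert_sdiff_of_mem _ hjT, insert_eq_of_mem (mem_union_right S hjT)]
    · have hunion : (S ∪ T) ∪ insert j T = insert j (S ∪ T) := by grind
      have hinter : (S ∪ T) ∩ insert j T = T := by grind
      have := hsuper (S ∪ T) (insert j T)
      rw [hunion, hinter] at this
      rw [insert_sdiff_of_notMem _ hjT, sum_insert (by simp [hjS])]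
      linarith

lemma le_add_sum_of_marginal_le {c : α → ℝ}
    (hmarg : ∀ S, ∀ i ∉ S, f (insert i S) - f S ≤ c i) (S T : Finset α) :
    f (S ∪ T) ≤ f S + ∑ i ∈ T \ S, c i := by
  induction T using Finset.induction_on with
  | empty => simp
  | @insert j T hjT ih =>
    rw [union_insert]
    by_cases hjS : j ∈ S
    · rwa [insert_sdiff_of_mem _ hjS, insert_eq_of_mem (mem_union_left T hjS)]
    · rw [insert_sdiff_of_notMem _ hjS, sum_insert (by simp [hjT])]
      linarith [hmarg (S ∪ T) j (by simp [hjS, hjT])]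

lemma sum_sum_compl_insert {M : Type*} [AddCommMonoid M] [Fintype α]
    (g : Finset α → Finset α → α → M) :
    ∑ S, ∑ i ∈ Sᶜ, g (insert i S) S i = ∑ T, ∑ i ∈ T, g T (T.erase i) i := by
  rw [sum_sigma', sum_sigma']
  refine sum_nbij' (fun z => ⟨insert z.2 z.1, z.2⟩) (fun z => ⟨z.1.erase z.2, z.2⟩)
    ?_ ?_ ?_ ?_ ?_ <;> rintro ⟨S, i⟩ h <;> simp_all [insert_erase]

end SetFunction

section Mechanism

variable {n : ℕ} {a d p : Fin n → ℝ}

lemma pmass_pos (hp : ∀ i, p i ∈ Set.Ioo (0:ℝ) 1) (S : Finset (Fin n)) : 0 < pmass n p S :=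
  mul_pos (prod_pos fun i _ => (hp i).1) (prod_pos fun i _ => sub_pos.2 (hp i).2)

lemma mul_pmass_erase {T : Finset (Fin n)} {i : Fin n} (hi : i ∈ T) :
    p i * pmass n p (T.erase i) = (1 - p i) * pmass n p T := by
  have hcompl : (T.erase i)ᶜ = insert i Tᶜ := by ext; simp
  rw [pmass, pmass, hcompl, prod_insert (by simpa using hi), ← mul_prod_erase T p hi]
  ring

lemma sum_vval_insert_sub_mul {S : Finset (Fin n)} {i : Fin n} (hi : i ∉ S) (c : Fin n → ℝ) :
    ∑ j, (vval n a d (insert i S) j - vval n a d S j) * c j = d i * c i := by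
  rw [Fintype.sum_eq_single i fun j hj => by simp [vval, hj]]
  simp [vval, hi]

lemma sum_vval_sub_mul_qOf (hd : ∀ i, d i ≠ 0) (u : Finset (Fin n) → ℝ)
    (S T : Finset (Fin n)) :
    ∑ i, (vval n a d S i - vval n a d T i) * qOf n d u T i
      = ∑ i ∈ S \ T, (u (insert i T) - u T) - ∑ i ∈ T \ S, d i := by
  have hterm : ∀ i, (vval n a d S i - vval n a d T i) * qOf n d u T i
      = (if i ∈ S \ T then u (insert i T) - u T else 0) - if i ∈ T \ S then d i else 0 := by
    intro i
    by_cases hS : i ∈ S <;> by_cases hT : i ∈ T <;>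
      simp [vval, qOf, hS, hT, mul_div_cancel₀ _ (hd i)]
  simp only [hterm, sum_sub_distrib, Fintype.sum_ite_mem]

lemma lp1Feasible_qOf {u : Finset (Fin n) → ℝ} (hd : ∀ i, 0 < d i) (hfeas : LP2Feasible n d u)
    (hmono : Monotone u) (hsuper : ∀ S T, u S + u T ≤ u (S ∪ T) + u (S ∩ T)) :
    LP1Feasible n a d u (qOf n d u) := by
  refine ⟨fun S T => ?_, hfeas.2, fun S i => ?_⟩
  · rw [sum_vval_sub_mul_qOf (fun i => (hd i).ne')]
    linarith [sum_marginal_le_of_supermodular hsuper S T, le_add_sum_of_marginal_le hfeas.1 S T]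
  · by_cases hi : i ∈ S
    · simp [qOf, hi]
    · rw [qOf, if_neg hi, div_le_one (hd i)]
      exact ⟨div_nonneg (sub_nonneg.2 (hmono (subset_insert i S))) (hd i).le, hfeas.1 S i hi⟩

noncomputable def valueBound (n : ℕ) (a d : Fin n → ℝ) (w : Finset (Fin n) → ℝ)
    (S : Finset (Fin n)) (i : Fin n) : ℝ :=
  if i ∈ S then a i + d i else a i / d i * (w (insert i S) - w S)

noncomputable def revenueBound (n : ℕ) (a d p : Fin n → ℝ) (w : Finset (Fin n) → ℝ) :
    ℝ :=
  ∑ S, pmass n p S * ((∑ i, valueBound n a d w S i) - w S)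

lemma vval_mul_qOf (u : Finset (Fin n) → ℝ) (S : Finset (Fin n)) (i : Fin n) :
    vval n a d S i * qOf n d u S i = valueBound n a d u S i := by
  unfold vval qOf valueBound
  split_ifs <;> ring

lemma LP1Obj_qOf (u : Finset (Fin n) → ℝ) :
    LP1Obj n a d p u (qOf n d u) = revenueBound n a d p u := by
  simp only [LP1Obj, revenueBound, vval_mul_qOf]

namespace LP1Feasible

variable {u : Finset (Fin n) → ℝ} {q : Finset (Fin n) → Fin n → ℝ}

lemma mul_le_insert_sub (h : LP1Feasible n a d u q) {S : Finset (Fin n)} {i : Fin n}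
    (hi : i ∉ S) : d i * q S i ≤ u (insert i S) - u S := by
  linarith [h.1 (insert i S) S, sum_vval_insert_sub_mul (a := a) (d := d) hi (q S)]

lemma insert_sub_le (h : LP1Feasible n a d u q) {S : Finset (Fin n)} {i : Fin n}
    (hi : i ∉ S) : u (insert i S) - u S ≤ d i * q (insert i S) i := by
  have hsum := sum_vval_insert_sub_mul (a := a) (d := d) hi (q (insert i S))
  have hbic := h.1 S (insert i S)
  simp only [← neg_sub (vval n a d (insert i S) _), neg_mul, sum_neg_distrib] at hbic
  linarith

lemma lp2Feasible (hd : ∀ i, 0 ≤ d i) (h : LP1Feasible n a d u q) : LP2Feasible n d u :=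
  ⟨fun S i hi => (h.insert_sub_le hi).trans
    (mul_le_of_le_one_right (hd i) (h.2.2 (insert i S) i).2), h.2.1⟩

lemma vval_mul_le_valueBound (ha : ∀ i, 0 ≤ a i) (hd : ∀ i, 0 < d i)
    (h : LP1Feasible n a d u q) (S : Finset (Fin n)) (i : Fin n) :
    vval n a d S i * q S i ≤ valueBound n a d u S i := by
  by_cases hi : i ∈ S
  · simp only [vval, valueBound, if_pos hi]
    exact mul_le_of_le_one_right (add_nonneg (ha i) (hd i).le) (h.2.2 S i).2
  · simp only [vval, valueBound, if_neg hi]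
    calc a i * q S i = a i / d i * (d i * q S i) := by field_simp [(hd i).ne']
      _ ≤ a i / d i * (u (insert i S) - u S) :=
        mul_le_mul_of_nonneg_left (h.mul_le_insert_sub hi) (div_nonneg (ha i) (hd i).le)

lemma LP1Obj_le_revenueBound (ha : ∀ i, 0 ≤ a i) (hd : ∀ i, 0 < d i)
    (hp : ∀ i, p i ∈ Set.Ioo (0:ℝ) 1) (h : LP1Feasible n a d u q) :
    LP1Obj n a d p u q ≤ revenueBound n a d p u :=
  sum_le_sum fun S _ => mul_le_mul_of_nonneg_left
    (sub_le_sub_right (sum_le_sum fun i _ => h.vval_mul_le_valueBound ha hd S i) _)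
    (pmass_pos hp S).le

lemma LP1Obj_lt_revenueBound (ha : ∀ i, 0 ≤ a i) (hd : ∀ i, 0 < d i)
    (hp : ∀ i, p i ∈ Set.Ioo (0:ℝ) 1) (h : LP1Feasible n a d u q)
    {S : Finset (Fin n)} {i : Fin n} (hlt : vval n a d S i * q S i < valueBound n a d u S i) :
    LP1Obj n a d p u q < revenueBound n a d p u := by
  refine sum_lt_sum (fun T _ => mul_le_mul_of_nonneg_left
    (sub_le_sub_right (sum_le_sum fun j _ => h.vval_mul_le_valueBound ha hd T j) _)
    (pmass_pos hp T).le) ⟨S, mem_univ S, ?_⟩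
  exact mul_lt_mul_of_pos_left (sub_lt_sub_right (sum_lt_sum
    (fun j _ => h.vval_mul_le_valueBound ha hd S j) ⟨i, mem_univ i, hlt⟩) _) (pmass_pos hp S)

lemma eq_qOf_of_LP1Obj_eq (ha : ∀ i, 0 < a i) (hd : ∀ i, 0 < d i)
    (hp : ∀ i, p i ∈ Set.Ioo (0:ℝ) 1) (h : LP1Feasible n a d u q)
    (heq : LP1Obj n a d p u q = revenueBound n a d p u) : q = qOf n d u := by
  funext S i
  by_contra hne
  have hv : 0 < vval n a d S i := by
    unfold vval; split_ifs <;> linarith [ha i, hd i]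
  have hlt : vval n a d S i * q S i < valueBound n a d u S i := by
    refine (h.vval_mul_le_valueBound (fun j => (ha j).le) hd S i).lt_of_ne ?_
    rw [← vval_mul_qOf]
    exact fun h' => hne (mul_left_cancel₀ hv.ne' h')
  exact (h.LP1Obj_lt_revenueBound (fun j => (ha j).le) hd hp hlt).ne heq

end LP1Feasible

lemma sum_pmass_mul_sum_compl_insert (hp : ∀ i, p i ≠ 0) (c : Fin n → ℝ)
    (w : Finset (Fin n) → ℝ) :
    ∑ S, pmass n p S * ∑ i ∈ Sᶜ, c i * w (insert i S)
      = ∑ T, pmass n p T * (∑ i ∈ T, c i * (1 - p i) / p i) * w T := by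
  simp only [mul_sum, sum_mul]
  rw [sum_sum_compl_insert fun T S i => pmass n p S * (c i * w T)]
  refine sum_congr rfl fun T _ => sum_congr rfl fun i hi => ?_
  rw [eq_div_of_mul_eq (hp i) ((mul_comm _ _).trans (mul_pmass_erase hi))]
  ring

lemma revenueBound_eq (hp : ∀ i, p i ≠ 0) (hd : ∀ i, d i ≠ 0) (w : Finset (Fin n) → ℝ) :
    revenueBound n a d p w = ∑ S, pmass n p S * ∑ i ∈ S, (a i + d i)
      + LP2Obj n p (fun i => a i / (p i * d i)) (1 + ∑ i, a i / d i) w := by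
  have hsplit : ∀ S, pmass n p S * ((∑ i, valueBound n a d w S i) - w S)
      = pmass n p S * ∑ i ∈ S, (a i + d i)
        + pmass n p S * ∑ i ∈ Sᶜ, a i / d i * w (insert i S)
        - pmass n p S * (∑ i ∈ Sᶜ, a i / d i + 1) * w S := by
    intro S
    have hsum : ∑ i, valueBound n a d w S i
        = ∑ i ∈ S, (a i + d i) + ∑ i ∈ Sᶜ, a i / d i * (w (insert i S) - w S) := by
      rw [← sum_add_sum_compl S]
      congr 1 <;> refine sum_congr rfl fun i hi => ?_ <;> simp_all [valueBound]
    rw [hsum]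
    simp only [mul_sub, sum_sub_distrib, ← sum_mul]
    ring
  simp only [revenueBound, hsplit, sum_sub_distrib, sum_add_distrib,
    sum_pmass_mul_sum_compl_insert hp, LP2Obj]
  rw [add_sub_assoc, ← sum_sub_distrib]
  congr 1
  refine sum_congr rfl fun T _ => ?_
  have hin : ∑ i ∈ T, a i / d i * (1 - p i) / p i
      = ∑ i ∈ T, a i / (p i * d i) - ∑ i ∈ T, a i / d i := by
    rw [← sum_sub_distrib]
    exact sum_congr rfl fun i _ => by field_simp [hp i, hd i]
  linear_combination pmass n p T * w T * (hin - sum_add_sum_compl T fun i => a i / d i)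

lemma LP2Obj_const_mul (x : Fin n → ℝ) (κ B : ℝ) (w : Finset (Fin n) → ℝ) :
    LP2Obj n p (fun i => κ * x i) (κ * B) w = κ * LP2Obj n p x B w := by
  rw [LP2Obj, LP2Obj, mul_sum]
  refine sum_congr rfl fun S _ => ?_
  rw [← mul_sum]
  ring

end Mechanism

theorem stmt_4_general (n : ℕ) (a d p x : Fin n → ℝ) (κ B : ℝ)
    (ha : ∀ i, 0 < a i) (hd : ∀ i, 0 < d i) (hp : ∀ i, p i ∈ Set.Ioo (0:ℝ) 1)
    (hκ : 0 < κ)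
    (hBeq : B = κ * (1 + ∑ i, a i / d i))
    (hxeq : ∀ i, x i = κ * a i / (p i * d i))
    (u : Finset (Fin n) → ℝ)
    (hfeas : LP2Feasible n d u)
    (hmax : ∀ u', LP2Feasible n d u' → LP2Obj n p x B u' ≤ LP2Obj n p x B u)
    (hmono : ∀ S T : Finset (Fin n), S ⊆ T → u S ≤ u T)
    (hsuper : ∀ S T : Finset (Fin n), u S + u T ≤ u (S ∪ T) + u (S ∩ T)) :
    LP1Feasible n a d u (qOf n d u) ∧
    (∀ u' q', LP1Feasible n a d u' q' →
        LP1Obj n a d p u' q' ≤ LP1Obj n a d p u (qOf n d u)) ∧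
    ((∀ u', LP2Feasible n d u' → LP2Obj n p x B u' = LP2Obj n p x B u → u' = u) →
      ∀ u' q', LP1Feasible n a d u' q' →
        LP1Obj n a d p u' q' = LP1Obj n a d p u (qOf n d u) →
        u' = u ∧ q' = qOf n d u) := by
  have ha₀ : ∀ i, 0 ≤ a i := fun i => (ha i).le
  have hd₀ : ∀ i, 0 ≤ d i := fun i => (hd i).le
  have hLP2 : ∀ w, κ * revenueBound n a d p w
      = κ * ∑ S, pmass n p S * ∑ i ∈ S, (a i + d i) + LP2Obj n p x B w := by
    intro w
    have hx : x = fun i => κ * (a i / (p i * d i)) :=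
      funext fun i => (hxeq i).trans (mul_div_assoc _ _ _)
    rw [hx, hBeq, LP2Obj_const_mul, revenueBound_eq (fun i => (hp i).1.ne') fun i => (hd i).ne']
    ring
  have hbound : ∀ u', LP2Feasible n d u' → revenueBound n a d p u' ≤ revenueBound n a d p u :=
    fun u' h' => le_of_mul_le_mul_left (by linarith [hLP2 u, hLP2 u', hmax u' h']) hκ
  refine ⟨lp1Feasible_qOf hd hfeas (fun S T => hmono S T) hsuper, fun u' q' h' => ?_,
    fun huniq u' q' h' heq => ?_⟩
  · rw [LP1Obj_qOf]
    exact (h'.LP1Obj_le_revenueBound ha₀ hd hp).trans (hbound u' (h'.lp2Feasible hd₀))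
  rw [LP1Obj_qOf] at heq
  have hrev : revenueBound n a d p u' = revenueBound n a d p u :=
    le_antisymm (hbound u' (h'.lp2Feasible hd₀)) (heq ▸ h'.LP1Obj_le_revenueBound ha₀ hd hp)
  obtain rfl : u' = u := by
    refine huniq u' (h'.lp2Feasible hd₀) ?_
    have hu' := hLP2 u'
    rw [hrev] at hu'
    linarith [hLP2 u]
  exact ⟨rfl, h'.eq_qOf_of_LP1Obj_eq ha hd hp heq⟩

theorem stmt_4 (n : ℕ) (hn : 1 ≤ n) (a d p x : Fin n → ℝ) (κ B : ℝ)
    (ha : ∀ i, 0 < a i) (hd : ∀ i, 0 < d i) (hp : ∀ i, p i ∈ Set.Ioo (0:ℝ) 1)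
    (hx : ∀ i, 0 < x i) (hκ : 0 < κ)
    (hBeq : B = κ * (1 + ∑ i, a i / d i))
    (hxeq : ∀ i, x i = κ * a i / (p i * d i))
    (u : Finset (Fin n) → ℝ)
    (hfeas : LP2Feasible n d u)
    (hmax : ∀ u', LP2Feasible n d u' → LP2Obj n p x B u' ≤ LP2Obj n p x B u)
    (hmono : ∀ S T : Finset (Fin n), S ⊆ T → u S ≤ u T)
    (hsuper : ∀ S T : Finset (Fin n), u S + u T ≤ u (S ∪ T) + u (S ∩ T)) :
    LP1Feasible n a d u (qOf n d u) ∧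
    (∀ u' q', LP1Feasible n a d u' q' →
        LP1Obj n a d p u' q' ≤ LP1Obj n a d p u (qOf n d u)) ∧
    ((∀ u', LP2Feasible n d u' → LP2Obj n p x B u' = LP2Obj n p x B u → u' = u) →
      ∀ u' q', LP1Feasible n a d u' q' →
        LP1Obj n a d p u' q' = LP1Obj n a d p u (qOf n d u) →
        u' = u ∧ q' = qOf n d u) :=
  stmt_4_general n a d p x κ B ha hd hp hκ hBeq hxeq u hfeas hmax hmono hsuper
end

section
/- Let w_1,…,w_n be positive integers, T a positive integer, and ℓ ∈ {1,…,n}. Define c^ℓ_i = 4n·w_i for 1 ≤ i ≤ n, c^ℓ_{n+1} = 4nT + 2n, c^ℓ_i = 1 for n+2 ≤ i ≤ n+ℓ, and S_ℓ = {n+1,…,n+ℓ}. Then for every nonempty S ⊆ [n]: (1) if Σ_{i∈S} w_i > T then Σ_{i∈S} c^ℓ_i > Σ_{j∈S_ℓ} c^ℓ_j; (2) if Σ_{i∈S} w_i ≤ T then for all U ⊆ {n+2,…,n+ℓ}, Σ_{i∈S∪U} c^ℓ_i < Σ_{j∈S_ℓ} c^ℓ_j; (3) for all U ⊆ {n+2,…,n+ℓ},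 Σ_{i∈S∪U∪{n+1}} c^ℓ_i > Σ_{j∈S_ℓ} c^ℓ_j. -/
open Finset
open scoped BigOperators

/-! The target sum is `4nT + 2n + (ℓ - 1)` while a set `S ⊆ [n]` contributes `4n · Σ_S w`.
Since `ℓ - 1 < n`, the unit entries together with the slack `2n` stay strictly below one
weight unit `4n`, so (1) and (2) are decided by comparing `Σ_S w` with `T`. In (3) the entry
`c (n+1)` cancels the bulk of the target, and the nonempty `S` alone outweighs `ℓ - 1`. -/

/-- The collection `𝔠_ℓ`: `c i = 4·n·w i` for `1 ≤ i ≤ n`, `c (n+1) = 4·n·T + 2·n`,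
and `c i = 1` for `n+2 ≤ i ≤ n+ℓ`. -/
def cColl (n T : ℕ) (w : ℕ → ℕ) : ℕ → ℕ :=
  fun i => if i ≤ n then 4 * n * w i else if i = n + 1 then 4 * n * T + 2 * n else 1

namespace cColl

variable {n T : ℕ} {w : ℕ → ℕ}

theorem of_le {i : ℕ} (hi : i ≤ n) : cColl n T w i = 4 * n * w i := by
  simp [cColl, hi]

theorem self_add_one : cColl n T w (n + 1) = 4 * n * T + 2 * n := by
  simp [cColl]

theorem of_add_two_le {i : ℕ} (hi : n + 2 ≤ i) : cColl n T w i = 1 := by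
  simp [cColl, show ¬ i ≤ n by omega, show i ≠ n + 1 by omega]

theorem sum_of_forall_le {S : Finset ℕ} (hS : ∀ i ∈ S, i ≤ n) :
    ∑ i ∈ S, cColl n T w i = 4 * n * ∑ i ∈ S, w i := by
  rw [mul_sum]
  exact sum_congr rfl fun i hi => of_le (hS i hi)

theorem sum_of_forall_add_two_le {U : Finset ℕ} (hU : ∀ i ∈ U, n + 2 ≤ i) :
    ∑ i ∈ U, cColl n T w i = #U := by
  rw [card_eq_sum_ones]
  exact sum_congr rfl fun i hi => of_add_two_le (hU i hi)

theorem sum_Icc {ℓ : ℕ} (hℓ : 1 ≤ ℓ) :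
    ∑ j ∈ Icc (n + 1) (n + ℓ), cColl n T w j = 4 * n * T + 2 * n + (ℓ - 1) := by
  have hsplit : Icc (n + 1) (n + ℓ) = insert (n + 1) (Icc (n + 2) (n + ℓ)) := by
    ext j
    simp only [mem_Icc, mem_insert]
    omega
  rw [hsplit, sum_insert (by simp), self_add_one,
    sum_of_forall_add_two_le fun i hi => (mem_Icc.1 hi).1, Nat.card_Icc]
  omega

theorem sum_union {S U : Finset ℕ} (hS : ∀ i ∈ S, i ≤ n) (hU : ∀ i ∈ U, n + 2 ≤ i) :
    ∑ i ∈ S ∪ U, cColl n T w i = 4 * n * ∑ i ∈ S, w i + #U := by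
  have hdisj : Disjoint S U :=
    disjoint_left.2 fun i hiS hiU => by have := hS i hiS; have := hU i hiU; omega
  rw [Finset.sum_union hdisj, sum_of_forall_le hS, sum_of_forall_add_two_le hU]

theorem sum_union_union_singleton {S U : Finset ℕ} (hS : ∀ i ∈ S, i ≤ n)
    (hU : ∀ i ∈ U, n + 2 ≤ i) :
    ∑ i ∈ S ∪ U ∪ {n + 1}, cColl n T w i
      = 4 * n * ∑ i ∈ S, w i + #U + (4 * n * T + 2 * n) := by
  have hnot : n + 1 ∉ S ∪ U := by
    simp only [mem_union, not_or]
    exact ⟨fun h => by have := hS _ h; omega, fun h => by have := hU _ h; omega⟩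
  rw [Finset.sum_union (disjoint_singleton_right.2 hnot), sum_union hS hU, sum_singleton,
    self_add_one]

end cColl

theorem stmt_7_general (n ℓ T : ℕ) (w : ℕ → ℕ)
    (hw : ∀ i ∈ Finset.Icc 1 n, 0 < w i)
    (hℓ1 : 1 ≤ ℓ) (hℓn : ℓ ≤ n)
    (S : Finset ℕ) (hS : S ⊆ Finset.Icc 1 n) (hSne : S.Nonempty) :
    (T < ∑ i ∈ S, w i →
      ∑ j ∈ Finset.Icc (n + 1) (n + ℓ), cColl n T w j < ∑ i ∈ S, cColl n T w i) ∧
    (∑ i ∈ S, w i ≤ T →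
      ∀ U ⊆ Finset.Icc (n + 2) (n + ℓ),
        ∑ i ∈ S ∪ U, cColl n T w i < ∑ j ∈ Finset.Icc (n + 1) (n + ℓ), cColl n T w j) ∧
    (∀ U ⊆ Finset.Icc (n + 2) (n + ℓ),
      ∑ j ∈ Finset.Icc (n + 1) (n + ℓ), cColl n T w j
        < ∑ i ∈ S ∪ U ∪ {n + 1}, cColl n T w i) := by
  have hS_le : ∀ i ∈ S, i ≤ n := fun i hi => (mem_Icc.1 (hS hi)).2
  have hU_ge : ∀ U ⊆ Icc (n + 2) (n + ℓ), ∀ i ∈ U, n + 2 ≤ i :=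
    fun U hU i hi => (mem_Icc.1 (hU hi)).1
  have hU_card : ∀ U ⊆ Icc (n + 2) (n + ℓ), #U ≤ ℓ - 1 := fun U hU => by
    have := card_le_card hU
    rw [Nat.card_Icc] at this
    omega
  have hwS : 0 < ∑ i ∈ S, w i := sum_pos (fun i hi => hw i (hS hi)) hSne
  rw [cColl.sum_Icc hℓ1]
  refine ⟨fun hT => ?_, fun hT U hU => ?_, fun U hU => ?_⟩
  · rw [cColl.sum_of_forall_le hS_le]
    have := Nat.mul_le_mul_left (4 * n) (Nat.succ_le_of_lt hT)
    rw [Nat.mul_succ] at this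
    omega
  · rw [cColl.sum_union hS_le (hU_ge U hU)]
    have := Nat.mul_le_mul_left (4 * n) hT
    have := hU_card U hU
    omega
  · rw [cColl.sum_union_union_singleton hS_le (hU_ge U hU)]
    have := Nat.mul_le_mul_left (4 * n) (Nat.succ_le_of_lt hwS)
    omega

theorem stmt_7 (n ℓ T : ℕ) (w : ℕ → ℕ)
    (hw : ∀ i ∈ Finset.Icc 1 n, 0 < w i) (hT : 0 < T)
    (hℓ1 : 1 ≤ ℓ) (hℓn : ℓ ≤ n)
    (S : Finset ℕ) (hS : S ⊆ Finset.Icc 1 n) (hSne : S.Nonempty) :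
    (T < ∑ i ∈ S, w i →
      ∑ j ∈ Finset.Icc (n + 1) (n + ℓ), cColl n T w j < ∑ i ∈ S, cColl n T w i) ∧
    (∑ i ∈ S, w i ≤ T →
      ∀ U ⊆ Finset.Icc (n + 2) (n + ℓ),
        ∑ i ∈ S ∪ U, cColl n T w i < ∑ j ∈ Finset.Icc (n + 1) (n + ℓ), cColl n T w j) ∧
    (∀ U ⊆ Finset.Icc (n + 2) (n + ℓ),
      ∑ j ∈ Finset.Icc (n + 1) (n + ℓ), cColl n T w j
        < ∑ i ∈ S ∪ U ∪ {n + 1}, cColl n T w i) :=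
  stmt_7_general n ℓ T w hw hℓ1 hℓn S hS hSne
end
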